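/- arXiv:1304.3172 — 2 statements merged into one kernel-verified Lean document; each statement's English description precedes it below -/
import Mathlib

section
/- Let m ≥ 2, v : Fin m → ℝ positive and strictly increasing, A, A* : Fin m → ℝ nonnegative with A_m* = A_m, ∑_{j=1}^m v_j A_j > 0, and suppose ∑_{j=1}^{m-1} (A_j* − A_j) prefix inequalities hold: for all i ∈ [1, m-1], ∑_{j=i}^{m-1}(A_j* − A_j) ≤ ∑_{j=i+1}^m A_j. Let r = max_{1≤i≤m-1} v_i/v_{i+1}. Then (∑_{j=1}^m v_j A_j*) / (∑_{j=1}^m v_j A_j) ≤ 1 + r. -/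
/-!
OPT's surplus over GREEDY is `∑_{j<m} v_j (A*_j - A_j)`. Since `v` increases, Abel summation turns
the suffix inequalities into `∑_{j<m} v_j (A*_j - A_j) ≤ ∑_{j<m} v_j A_{j+1}`, and
`v_j ≤ r v_{j+1}` bounds the right-hand side by `r ∑_j v_j A_j`.
-/

open Finset

theorem sum_Icc_add_one {M : Type*} [AddCommMonoid M] (f : ℕ → M) (a b : ℕ) :
    ∑ j ∈ Icc (a + 1) (b + 1), f j = ∑ j ∈ Icc a b, f (j + 1) := by
  rw [← map_add_right_Icc, sum_map]
  rfl

theorem mul_sum_Icc_le_sum_Icc_mul {v z : ℕ → ℝ} {a n : ℕ}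
    (hv : ∀ i ∈ Ico a n, v i ≤ v (i + 1))
    (hz : ∀ i ∈ Ioc a n, 0 ≤ ∑ j ∈ Icc i n, z j) :
    v a * ∑ j ∈ Icc a n, z j ≤ ∑ j ∈ Icc a n, v j * z j := by
  rcases lt_or_ge n a with hna | han
  · simp [Icc_eq_empty_of_lt hna]
  induction han using Nat.decreasingInduction with
  | self => simp
  | of_succ k hkn ih =>
    have hsplit : ∀ f : ℕ → ℝ, ∑ j ∈ Icc k n, f j = f k + ∑ j ∈ Icc (k + 1) n, f j := fun f => by
      rw [Icc_eq_cons_Ioc hkn.le, sum_cons, Icc_add_one_left_eq_Ioc]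
    have htail := ih (fun i hi => hv i (by simp at hi ⊢; omega))
      (fun i hi => hz i (by simp at hi ⊢; omega))
    have hstep : v k * ∑ j ∈ Icc (k + 1) n, z j ≤ v (k + 1) * ∑ j ∈ Icc (k + 1) n, z j :=
      mul_le_mul_of_nonneg_right (hv k (by simp; omega)) (hz (k + 1) (by simp; omega))
    rw [hsplit z, hsplit (fun j => v j * z j), mul_add]
    linarith

theorem sum_Icc_mul_le_of_suffix_sum_le {v x y : ℕ → ℝ} {a n : ℕ} (hva : 0 ≤ v a)
    (hv : ∀ i ∈ Ico a n, v i ≤ v (i + 1))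
    (hxy : ∀ i ∈ Icc a n, ∑ j ∈ Icc i n, x j ≤ ∑ j ∈ Icc i n, y j) :
    ∑ j ∈ Icc a n, v j * x j ≤ ∑ j ∈ Icc a n, v j * y j := by
  have hz : ∀ i ∈ Icc a n, 0 ≤ ∑ j ∈ Icc i n, (y j - x j) := fun i hi => by
    rw [sum_sub_distrib]; linarith [hxy i hi]
  rcases lt_or_ge n a with hna | han
  · simp [Icc_eq_empty_of_lt hna]
  have habel := mul_sum_Icc_le_sum_Icc_mul hv (fun i hi => hz i (Ioc_subset_Icc_self hi))
  have := (mul_nonneg hva (hz a (by simp [han]))).trans habel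
  simpa only [mul_sub, sum_sub_distrib, sub_nonneg] using this

theorem stmt_2_general (m : ℕ) (v A Astar : ℕ → ℝ)
    (hv : ∀ i ∈ Icc 1 m, 0 < v i)
    (hmono : ∀ i ∈ Icc 1 (m - 1), v i < v (i + 1))
    (hA : ∀ i ∈ Icc 1 m, 0 ≤ A i)
    (hlast : Astar m = A m)
    (hpos : 0 < ∑ j ∈ Icc 1 m, v j * A j)
    (hsuffix : ∀ i ∈ Icc 1 (m - 1),
      ∑ j ∈ Icc i (m - 1), (Astar j - A j) ≤ ∑ j ∈ Icc (i + 1) m, A j)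
    (hne : (Icc 1 (m - 1)).Nonempty)
    (r : ℝ) (hr : r = (Icc 1 (m - 1)).sup' hne (fun i => v i / v (i + 1))) :
    (∑ j ∈ Icc 1 m, v j * Astar j) / (∑ j ∈ Icc 1 m, v j * A j) ≤ 1 + r := by
  obtain ⟨n, rfl⟩ : ∃ n, m = n + 1 := ⟨m - 1, by have := nonempty_Icc.mp hne; omega⟩
  simp only [Nat.add_sub_cancel] at hmono hsuffix hne hr
  have hratio : ∀ i ∈ Icc 1 n, v i ≤ r * v (i + 1) := fun i hi => by
    have hvi : 0 < v (i + 1) := hv (i + 1) (by simp at hi ⊢; omega)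
    rw [← div_le_iff₀ hvi, hr]
    exact le_sup' (fun i => v i / v (i + 1)) hi
  have hr0 : 0 ≤ r := by
    obtain ⟨i, hi⟩ := hne
    exact nonneg_of_mul_nonneg_left ((hv i (by simp at hi ⊢; omega)).le.trans (hratio i hi))
      (hv (i + 1) (by simp at hi ⊢; omega))
  have hgain : ∑ j ∈ Icc 1 n, v j * (Astar j - A j) ≤ ∑ j ∈ Icc 1 n, v j * A (j + 1) :=
    sum_Icc_mul_le_of_suffix_sum_le (hv 1 (by simp)).le
      (fun i hi => (hmono i (Ico_subset_Icc_self hi)).le)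
      (fun i hi => (hsuffix i hi).trans_eq (sum_Icc_add_one A i n))
  have hshifted : ∑ j ∈ Icc 1 n, v j * A (j + 1) ≤ r * ∑ j ∈ Icc 1 (n + 1), v j * A j := by
    calc ∑ j ∈ Icc 1 n, v j * A (j + 1)
        ≤ ∑ j ∈ Icc 1 n, r * (v (j + 1) * A (j + 1)) := by
          refine sum_le_sum fun j hj => ?_
          rw [← mul_assoc]
          exact mul_le_mul_of_nonneg_right (hratio j hj) (hA (j + 1) (by simp at hj ⊢; omega))
      _ = r * ∑ j ∈ Icc 2 (n + 1), v j * A j := by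
          rw [← mul_sum, sum_Icc_add_one (fun j => v j * A j)]
      _ ≤ r * ∑ j ∈ Icc 1 (n + 1), v j * A j := by
          refine mul_le_mul_of_nonneg_left (sum_le_sum_of_subset_of_nonneg ?_ ?_) hr0
          · exact Icc_subset_Icc_left (by norm_num)
          · exact fun j hj _ => mul_nonneg (hv j hj).le (hA j hj)
  have hsplit : ∑ j ∈ Icc 1 (n + 1), v j * Astar j
      = ∑ j ∈ Icc 1 (n + 1), v j * A j + ∑ j ∈ Icc 1 n, v j * (Astar j - A j) := by
    simp only [sum_Icc_succ_top (Nat.le_add_left 1 n), hlast, mul_sub, sum_sub_distrib]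
    ring
  rw [div_le_iff₀ hpos, hsplit]
  linarith

theorem stmt_2 (m : ℕ) (hm : 2 ≤ m) (v A Astar : ℕ → ℝ)
    (hv : ∀ i ∈ Icc 1 m, 0 < v i)
    (hmono : ∀ i ∈ Icc 1 (m - 1), v i < v (i + 1))
    (hA : ∀ i ∈ Icc 1 m, 0 ≤ A i)
    (hAstar : ∀ i ∈ Icc 1 m, 0 ≤ Astar i)
    (hlast : Astar m = A m)
    (hpos : 0 < ∑ j ∈ Icc 1 m, v j * A j)
    (hsuffix : ∀ i ∈ Icc 1 (m - 1),
      ∑ j ∈ Icc i (m - 1), (Astar j - A j) ≤ ∑ j ∈ Icc (i + 1) m, A j)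
    (hne : (Icc 1 (m - 1)).Nonempty)
    (r : ℝ) (hr : r = (Icc 1 (m - 1)).sup' hne (fun i => v i / v (i + 1))) :
    (∑ j ∈ Icc 1 m, v j * Astar j) / (∑ j ∈ Icc 1 m, v j * A j) ≤ 1 + r :=
  stmt_2_general m v A Astar hv hmono hA hlast hpos hsuffix hne r hr
end

section
/- Let m ≥ 2, let B : Fin m → ℕ be positive queue capacities, and let v : Fin m → ℝ with 0 < v_1 < ... < v_m. Define GREEDY(σ) = ∑_{j=1}^m B_j v_j and ADV(σ) = B_1 v_1 + ∑_{j=2}^m B_j (v_{j-1} + v_j). Then ADV(σ)/GREEDY(σ) ≤ 1 + r where r = max_{1≤i≤m-1} v_i/v_{i+1}, and ADV(σ)/GREEDY(σ) ≥ 1 + (v_ℓ · B_{ℓ+1}) / (∑_{j=1}^m B_j v_j) for every ℓ ∈ [1, m-1]. -/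
/-!
Every packet GREEDY sends is also sent by ADV, so `ADV = GREEDY + S`, where the surplus
`S = ∑ᵢ vᵢ B_{i+1}` comes from ADV additionally sending `B_{i+1}` copies of the next-lower
value `vᵢ`. Each term of `S` is at most `r · v_{i+1} B_{i+1}`, giving `S ≤ r · GREEDY`, while
keeping only the term `i = ℓ` gives `S ≥ v_ℓ B_{ℓ+1}`.
-/

open Finset

theorem sum_Icc_two_eq_sum_Icc_one_succ {M : Type*} [AddCommMonoid M] (f : ℕ → M) {m : ℕ}
    (hm : 1 ≤ m) : ∑ j ∈ Icc 2 m, f j = ∑ i ∈ Icc 1 (m - 1), f (i + 1) := by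
  obtain ⟨n, rfl⟩ := Nat.exists_eq_add_of_le' hm
  rw [Nat.add_sub_cancel, ← map_add_right_Icc 1 n 1, sum_map]
  rfl

theorem sum_Icc_one_eq_add_sum_Icc_two {M : Type*} [AddCommMonoid M] (f : ℕ → M) {m : ℕ}
    (hm : 1 ≤ m) : ∑ j ∈ Icc 1 m, f j = f 1 + ∑ j ∈ Icc 2 m, f j := by
  rw [Icc_eq_cons_Ioc hm, sum_cons, ← Icc_add_one_left_eq_Ioc]
  rfl

section Benefits

variable (m : ℕ) (B : ℕ → ℕ) (v : ℕ → ℝ)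

def greedyBenefit : ℝ := ∑ j ∈ Icc 1 m, (B j : ℝ) * v j

def advBenefit : ℝ := (B 1 : ℝ) * v 1 + ∑ j ∈ Icc 2 m, (B j : ℝ) * (v (j - 1) + v j)

def advSurplus : ℝ := ∑ i ∈ Icc 1 (m - 1), v i * (B (i + 1) : ℝ)

variable {m B v}

theorem advBenefit_eq_greedyBenefit_add_advSurplus (hm : 1 ≤ m) :
    advBenefit m B v = greedyBenefit m B v + advSurplus m B v := by
  have hshift : ∑ j ∈ Icc 2 m, (B j : ℝ) * v (j - 1) = advSurplus m B v := by
    rw [sum_Icc_two_eq_sum_Icc_one_succ _ hm, advSurplus]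
    exact sum_congr rfl fun i _ => by rw [Nat.add_sub_cancel, mul_comm]
  rw [advBenefit, greedyBenefit, sum_Icc_one_eq_add_sum_Icc_two _ hm, ← hshift]
  simp only [mul_add, sum_add_distrib]
  ring

theorem greedyBenefit_pos (hm : 1 ≤ m) (hB : ∀ j ∈ Icc 1 m, 0 < B j)
    (hv : ∀ j ∈ Icc 1 m, 0 < v j) : 0 < greedyBenefit m B v :=
  sum_pos (fun j hj => mul_pos (Nat.cast_pos.mpr (hB j hj)) (hv j hj))
    ⟨1, mem_Icc.mpr ⟨le_rfl, hm⟩⟩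

theorem le_advSurplus (hv : ∀ i ∈ Icc 1 (m - 1), 0 ≤ v i) {ℓ : ℕ} (hℓ : ℓ ∈ Icc 1 (m - 1)) :
    v ℓ * (B (ℓ + 1) : ℝ) ≤ advSurplus m B v :=
  single_le_sum (f := fun i => v i * (B (i + 1) : ℝ))
    (fun i hi => mul_nonneg (hv i hi) (Nat.cast_nonneg _)) hℓ

theorem advSurplus_le_mul_greedyBenefit (hm : 1 ≤ m) {r : ℝ} (hr : 0 ≤ r)
    (hv : ∀ j ∈ Icc 1 m, 0 ≤ v j) (hstep : ∀ i ∈ Icc 1 (m - 1), v i ≤ r * v (i + 1)) :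
    advSurplus m B v ≤ r * greedyBenefit m B v := by
  calc advSurplus m B v
      ≤ ∑ i ∈ Icc 1 (m - 1), r * ((B (i + 1) : ℝ) * v (i + 1)) :=
        sum_le_sum fun i hi => by
          rw [mul_left_comm, mul_comm (v i)]
          exact mul_le_mul_of_nonneg_left (hstep i hi) (Nat.cast_nonneg _)
    _ = r * ∑ j ∈ Icc 2 m, (B j : ℝ) * v j := by
        rw [← mul_sum, sum_Icc_two_eq_sum_Icc_one_succ _ hm]
    _ ≤ r * greedyBenefit m B v := by
        refine mul_le_mul_of_nonneg_left (sum_le_sum_of_subset_of_nonneg ?_ ?_) hr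
        · exact Icc_subset_Icc_left (by norm_num)
        · exact fun j hj _ => mul_nonneg (Nat.cast_nonneg _) (hv j hj)

end Benefits

theorem stmt_7_general (m : ℕ) (B : ℕ → ℕ) (v : ℕ → ℝ)
    (hB : ∀ j ∈ Icc 1 m, 0 < B j)
    (hv : ∀ i ∈ Icc 1 m, 0 < v i)
    (hne : (Icc 1 (m - 1)).Nonempty)
    (r : ℝ) (hr : r = (Icc 1 (m - 1)).sup' hne (fun i => v i / v (i + 1)))
    (GREEDY ADV : ℝ)
    (hGREEDY : GREEDY = ∑ j ∈ Icc 1 m, (B j : ℝ) * v j)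
    (hADV : ADV = (B 1 : ℝ) * v 1 + ∑ j ∈ Icc 2 m, (B j : ℝ) * (v (j - 1) + v j)) :
    ADV / GREEDY ≤ 1 + r ∧
      ∀ ℓ ∈ Icc 1 (m - 1),
        ADV / GREEDY ≥ 1 + (v ℓ * (B (ℓ + 1) : ℝ)) / (∑ j ∈ Icc 1 m, (B j : ℝ) * v j) := by
  have hm : 1 ≤ m := by
    obtain ⟨i, hi⟩ := hne
    rw [mem_Icc] at hi
    omega
  have hmem : ∀ i ∈ Icc 1 (m - 1), i ∈ Icc 1 m ∧ i + 1 ∈ Icc 1 m := fun i hi => by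
    simp only [mem_Icc] at hi ⊢
    omega
  have hG : 0 < GREEDY := hGREEDY ▸ greedyBenefit_pos hm hB hv
  have hratio : ADV / GREEDY = 1 + advSurplus m B v / GREEDY := by
    rw [hADV, ← advBenefit, advBenefit_eq_greedyBenefit_add_advSurplus hm, greedyBenefit,
      ← hGREEDY, same_add_div hG.ne']
  have hstep : ∀ i ∈ Icc 1 (m - 1), v i ≤ r * v (i + 1) := fun i hi => by
    rw [← div_le_iff₀ (hv _ (hmem i hi).2), hr]
    exact le_sup' (fun i => v i / v (i + 1)) hi
  have hr0 : 0 ≤ r := by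
    obtain ⟨i, hi⟩ := hne
    rw [hr]
    exact (div_pos (hv _ (hmem i hi).1) (hv _ (hmem i hi).2)).le.trans
      (le_sup' (fun i => v i / v (i + 1)) hi)
  refine ⟨?_, fun ℓ hℓ => ?_⟩
  · rw [hratio, add_le_add_iff_left, div_le_iff₀ hG, hGREEDY]
    exact advSurplus_le_mul_greedyBenefit hm hr0 (fun j hj => (hv j hj).le) hstep
  · rw [hratio, ← hGREEDY, ge_iff_le, add_le_add_iff_left]
    exact div_le_div_of_nonneg_right (le_advSurplus (fun i hi => (hv i (hmem i hi).1).le) hℓ)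
      hG.le

theorem stmt_7 (m : ℕ) (hm : 2 ≤ m) (B : ℕ → ℕ) (v : ℕ → ℝ)
    (hB : ∀ j ∈ Icc 1 m, 0 < B j)
    (hv : ∀ i ∈ Icc 1 m, 0 < v i)
    (hmono : ∀ i ∈ Icc 1 (m - 1), v i < v (i + 1))
    (hne : (Icc 1 (m - 1)).Nonempty)
    (r : ℝ) (hr : r = (Icc 1 (m - 1)).sup' hne (fun i => v i / v (i + 1)))
    (GREEDY ADV : ℝ)
    (hGREEDY : GREEDY = ∑ j ∈ Icc 1 m, (B j : ℝ) * v j)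
    (hADV : ADV = (B 1 : ℝ) * v 1 + ∑ j ∈ Icc 2 m, (B j : ℝ) * (v (j - 1) + v j)) :
    ADV / GREEDY ≤ 1 + r ∧
      ∀ ℓ ∈ Icc 1 (m - 1),
        ADV / GREEDY ≥ 1 + (v ℓ * (B (ℓ + 1) : ℝ)) / (∑ j ∈ Icc 1 m, (B j : ℝ) * v j) :=
  stmt_7_general m B v hB hv hne r hr GREEDY ADV hGREEDY hADV
end
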